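/- With C(s,k) as above and s > l − t, 0 ≤ t ≤ l: C(s, 0) = q^{t(s+t−l+1)} / ((q^{2t} − 1)(q^{2(t−1)} − 1) ⋯ (q^2 − 1)); in particular the minimal degree of C(s,0) (the largest d with C(s,0) ∈ q^d A_0, where A_0 is the ring of rational functions regular at q = 0) is t(s + t − l + 1). -/

import Mathlib

noncomputable section

/-- The field `ℚ(q)` of rational functions. -/
abbrev K : Type := RatFunc ℚ

/-- The indeterminate `q`. -/
def q : K := RatFunc.X

/-- The balanced quantum integer `[k] = (q^k - q^{-k})/(q - q⁻¹)`. -/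
def qint (k : ℤ) : K := (q ^ k - q ^ (-k)) / (q - q⁻¹)

/-- The quantum factorial `[k]! = [1][2]⋯[k]`. -/
def qfact : ℕ → K
  | 0 => 1
  | k + 1 => qfact k * qint ((k : ℤ) + 1)

/-- The Gaussian binomial coefficient `[c choose d] = [c]!/([c-d]![d]!)` for `c ≥ d ≥ 0`,
and `0` otherwise. -/
def qbinom (c d : ℤ) : K :=
  if d ≤ c ∧ 0 ≤ d then qfact c.toNat / (qfact (c - d).toNat * qfact d.toNat) else 0

/-- The coefficient `a_{t,i}(q) = ∏_{0 ≤ j ≤ i−1} q^{l−t+1}/(q^{2(l−j)} − 1)`,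
with `a_{t,0} = 1`. -/
def att (l t i : ℕ) : K :=
  ∏ j ∈ Finset.range i, q ^ ((l : ℤ) - t + 1) / (q ^ (2 * ((l : ℤ) - j)) - 1)

/-- `C(s,k) = ∑_{i=max(0,l−s−k)}^{min(t,l−k)} a_{t,i}(q) q^{(k−i)(i−l+s+k)}
[l−k choose i] [t−l+s+k choose t−i]`. -/
def Cfun (l t s k : ℕ) : K :=
  ∑ i ∈ Finset.Icc (max 0 ((l : ℤ) - s - k)) (min (t : ℤ) ((l : ℤ) - k)),
    att l t i.toNat * q ^ (((k : ℤ) - i) * (i - l + s + k)) *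
      qbinom ((l : ℤ) - k) i * qbinom ((t : ℤ) - l + s + k) ((t : ℤ) - i)

/-- `A₀ ⊂ ℚ(q)`: the subring of rational functions regular at `q = 0`. -/
def inA0 (f : K) : Prop :=
  ∃ p r : Polynomial ℚ, r.coeff 0 ≠ 0 ∧
    f = algebraMap (Polynomial ℚ) K p / algebraMap (Polynomial ℚ) K r

/-!
For `k = 0` the sum may be extended to all `0 ≤ i ≤ t` (the added terms vanish since
`t - i > M := s + t - l`), and the coefficient telescopes to
`a_{t,i} [l choose i] = q^{i(i-t+1)} / ∏_{j=1}^{i} (q^{2j} - 1)`. The claim becomes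
`∑_{i=0}^{t} q^{i(1-M)} [M choose t-i] / ∏_{j=1}^{i} (q^{2j} - 1)
  = q^{t(M+1)} / ∏_{j=1}^{t} (q^{2j} - 1)`,
which follows by induction on `M` from the q-Pascal rule
`[M+1 choose d] = q^d [M choose d] + q^{d-M-1} [M choose d-1]`.
The denominator has constant term `(-1)^t`, so it is a unit of `A₀`; this gives the minimal
degree.
-/

open Finset

lemma q_ne_zero : q ≠ 0 := RatFunc.X_ne_zero

lemma q_zpow_ne_one {n : ℤ} (hn : n ≠ 0) : q ^ n ≠ 1 := by
  intro h
  obtain ⟨m, hm, hqm⟩ :=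
    isOfFinOrder_iff_pow_eq_one.mp (isOfFinOrder_iff_zpow_eq_one.mpr ⟨n, hn, h⟩)
  refine RatFunc.transcendental_X (K := ℚ) ⟨Polynomial.X ^ m - Polynomial.C 1,
    Polynomial.X_pow_sub_C_ne_zero hm 1, ?_⟩
  simpa [q, sub_eq_zero] using hqm

lemma q_zpow_sub_one_ne_zero {n : ℤ} (hn : n ≠ 0) : q ^ n - 1 ≠ 0 :=
  sub_ne_zero.mpr (q_zpow_ne_one hn)

lemma q_sub_inv_ne_zero : q - q⁻¹ ≠ 0 := by
  intro h
  refine q_zpow_ne_one (n := 2) two_ne_zero ?_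
  rw [zpow_two, ← mul_inv_cancel₀ q_ne_zero, ← sub_eq_zero.mp h]

lemma q_zpow_mul_zpow {a b c : ℤ} (h : a + b = c) : q ^ a * q ^ b = q ^ c := by
  rw [← h, zpow_add₀ q_ne_zero]

lemma qint_eq (n : ℤ) : qint n = q ^ (-n) * (q ^ (2 * n) - 1) / (q - q⁻¹) := by
  rw [qint, mul_sub, ← zpow_add₀ q_ne_zero, mul_one]
  ring_nf

lemma qint_add (a b : ℤ) : qint (a + b) = q ^ a * qint b + q ^ (-b) * qint a := by
  simp only [qint, mul_div_assoc', ← add_div, mul_sub, ← zpow_add₀ q_ne_zero]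
  ring_nf

lemma qint_ne_zero {n : ℤ} (hn : n ≠ 0) : qint n ≠ 0 := by
  rw [qint_eq]
  exact div_ne_zero (mul_ne_zero (zpow_ne_zero _ q_ne_zero)
    (q_zpow_sub_one_ne_zero (by omega))) q_sub_inv_ne_zero

lemma qint_div_qint (a b : ℤ) :
    qint a / qint b = q ^ (b - a) * (q ^ (2 * a) - 1) / (q ^ (2 * b) - 1) := by
  rw [qint_eq, qint_eq, div_div_div_cancel_right₀ q_sub_inv_ne_zero, mul_div_mul_comm,
    ← zpow_sub₀ q_ne_zero, mul_div_assoc, neg_sub_neg]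

lemma qfact_ne_zero : ∀ n : ℕ, qfact n ≠ 0
  | 0 => one_ne_zero
  | n + 1 => mul_ne_zero (qfact_ne_zero n) (qint_ne_zero (by omega))

lemma qfact_toNat_of_pos {c : ℤ} (hc : 0 < c) : qfact c.toNat = qfact (c - 1).toNat * qint c := by
  rw [show c.toNat = (c - 1).toNat + 1 by omega, qfact]
  congr 2
  omega

lemma qbinom_of_le {c d : ℤ} (hd : 0 ≤ d) (hdc : d ≤ c) :
    qbinom c d = qfact c.toNat / (qfact (c - d).toNat * qfact d.toNat) :=
  if_pos ⟨hdc, hd⟩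

lemma qbinom_of_lt {c d : ℤ} (h : c < d) : qbinom c d = 0 :=
  if_neg fun h' => by omega

lemma qbinom_of_neg {c d : ℤ} (h : d < 0) : qbinom c d = 0 :=
  if_neg fun h' => by omega

lemma qbinom_zero_right {c : ℤ} (hc : 0 ≤ c) : qbinom c 0 = 1 := by
  rw [qbinom_of_le le_rfl hc, sub_zero, Int.toNat_zero, qfact, mul_one,
    div_self (qfact_ne_zero _)]

lemma qbinom_self {c : ℤ} (hc : 0 ≤ c) : qbinom c c = 1 := by
  rw [qbinom_of_le hc le_rfl, sub_self, Int.toNat_zero, qfact, one_mul,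
    div_self (qfact_ne_zero _)]

lemma qbinom_succ_right {c d : ℤ} (hd : 0 ≤ d) (hdc : d < c) :
    qbinom c (d + 1) = qbinom c d * (qint (c - d) / qint (d + 1)) := by
  rw [qbinom_of_le (by omega) hdc, qbinom_of_le hd hdc.le,
    qfact_toNat_of_pos (show 0 < c - d by omega), qfact_toNat_of_pos (show 0 < d + 1 by omega),
    show c - d - 1 = c - (d + 1) by ring, add_sub_cancel_right]
  have := qfact_ne_zero (c - (d + 1)).toNat
  have := qfact_ne_zero d.toNat
  have := qint_ne_zero (show c - d ≠ 0 by omega)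
  have := qint_ne_zero (show d + 1 ≠ 0 by omega)
  field_simp

lemma qbinom_pascal_of_pos {c d : ℤ} (hd : 0 < d) (hdc : d < c) :
    qbinom c d = q ^ d * qbinom (c - 1) d + q ^ (d - c) * qbinom (c - 1) (d - 1) := by
  rw [qbinom_of_le hd.le hdc.le, qbinom_of_le hd.le (by omega), qbinom_of_le (by omega) (by omega),
    show c - 1 - (d - 1) = c - d by ring, qfact_toNat_of_pos (show 0 < c by omega),
    qfact_toNat_of_pos (show 0 < c - d by omega), qfact_toNat_of_pos hd,
    show c - d - 1 = c - 1 - d by ring]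
  have hqint : qint c = q ^ d * qint (c - d) + q ^ (d - c) * qint d := by
    simpa using qint_add d (c - d)
  rw [hqint]
  have := qfact_ne_zero (c - 1 - d).toNat
  have := qfact_ne_zero (d - 1).toNat
  have := qint_ne_zero (show c - d ≠ 0 by omega)
  have := qint_ne_zero hd.ne'
  field_simp

lemma qbinom_pascal {c : ℤ} (d : ℤ) (hc : 0 < c) :
    qbinom c d = q ^ d * qbinom (c - 1) d + q ^ (d - c) * qbinom (c - 1) (d - 1) := by
  rcases lt_trichotomy d 0 with hd | rfl | hd
  · simp [qbinom_of_neg, hd, show d - 1 < 0 by omega]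
  · rw [qbinom_zero_right hc.le, qbinom_zero_right (by omega), qbinom_of_neg (by omega)]
    simp
  rcases lt_trichotomy d c with hdc | rfl | hdc
  · exact qbinom_pascal_of_pos hd hdc
  · rw [qbinom_self hd.le, qbinom_self (by omega), qbinom_of_lt (by omega)]
    simp
  · simp [qbinom_of_lt, hdc, show c - 1 < d - 1 by omega, show c - 1 < d by omega]

-- `(-1)^n (q²; q²)_n` in q-Pochhammer notation.
def qPoch (n : ℕ) : K := ∏ j ∈ Icc 1 n, (q ^ (2 * j) - 1)

lemma qPoch_zero : qPoch 0 = 1 := rfl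

lemma qPoch_succ (n : ℕ) : qPoch (n + 1) = qPoch n * (q ^ (2 * ((n : ℤ) + 1)) - 1) := by
  rw [qPoch, prod_Icc_succ_top (by omega), ← qPoch]
  norm_cast

lemma qPoch_ne_zero (n : ℕ) : qPoch n ≠ 0 :=
  prod_ne_zero_iff.mpr fun j hj => by
    have := q_zpow_sub_one_ne_zero (n := ((2 * j : ℕ) : ℤ)) (by grind)
    rwa [zpow_natCast] at this

lemma att_succ (l t i : ℕ) :
    att l t (i + 1) = att l t i * (q ^ ((l : ℤ) - t + 1) / (q ^ (2 * ((l : ℤ) - i)) - 1)) :=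
  prod_range_succ _ _

lemma att_mul_qbinom (l t : ℕ) {i : ℕ} (hi : i ≤ l) :
    att l t i * qbinom l i = q ^ ((i : ℤ) * (i - t + 1)) / qPoch i := by
  induction i with
  | zero => simp [att, qbinom_zero_right, qPoch_zero]
  | succ i ih =>
    have factor : q ^ ((l : ℤ) - t + 1) / (q ^ (2 * ((l : ℤ) - i)) - 1)
          * (qint (l - i) / qint (i + 1))
        = q ^ (2 * (i : ℤ) + 2 - t) / (q ^ (2 * ((i : ℤ) + 1)) - 1) := by
      have := q_zpow_sub_one_ne_zero (n := 2 * ((l : ℤ) - i)) (by omega)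
      rw [qint_div_qint]
      field_simp
      rw [← zpow_add₀ q_ne_zero]
      ring_nf
    push_cast
    rw [att_succ, qbinom_succ_right (by positivity) (by omega), qPoch_succ,
      mul_mul_mul_comm, ih (by omega), factor, div_mul_div_comm, ← zpow_add₀ q_ne_zero]
    ring_nf

lemma sum_range_succ_add_eq_mul_sum {R : Type*} [CommSemiring R] (f g h : ℕ → R) (c : R)
    {t : ℕ} (hg : g t = 0) (hf : f 0 = c * h 0)
    (hfg : ∀ i < t, f (i + 1) + g i = c * h (i + 1)) :
    ∑ i ∈ range (t + 1), (f i + g i) = c * ∑ i ∈ range (t + 1), h i := by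
  rw [sum_add_distrib, sum_range_succ' f, sum_range_succ g, hg, add_zero, add_right_comm,
    ← sum_add_distrib, sum_congr rfl fun i hi => hfg i (mem_range.mp hi), ← mul_sum, hf,
    ← mul_add, ← sum_range_succ' h]

lemma sum_qbinom_div_qPoch (t M : ℕ) :
    ∑ i ∈ range (t + 1), q ^ ((i : ℤ) * (1 - M)) / qPoch i * qbinom M ((t : ℤ) - i)
      = q ^ ((t : ℤ) * (M + 1)) / qPoch t := by
  induction M with
  | zero =>
    rw [sum_range_succ, sum_eq_zero fun i hi => by
      rw [qbinom_of_lt (by rw [mem_range] at hi; push_cast; omega), mul_zero]]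
    simp [qbinom_zero_right]
  | succ M ih =>
    push_cast
    have pascal : ∀ i : ℕ,
        q ^ ((i : ℤ) * (1 - (M + 1))) / qPoch i * qbinom (M + 1) ((t : ℤ) - i)
        = q ^ ((i : ℤ) * (1 - (M + 1))) / qPoch i * q ^ ((t : ℤ) - i) * qbinom M ((t : ℤ) - i)
          + q ^ ((i : ℤ) * (1 - (M + 1))) / qPoch i * q ^ ((t : ℤ) - i - (M + 1))
            * qbinom M ((t : ℤ) - i - 1) := by
      intro i
      rw [qbinom_pascal _ (by omega), add_sub_cancel_right]
      ring
    rw [sum_congr rfl fun i _ => pascal i, sum_range_succ_add_eq_mul_sum _ _ _ (q ^ (t : ℤ)), ih,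
      mul_div_assoc', ← zpow_add₀ q_ne_zero]
    · ring_nf
    · rw [qbinom_of_neg (by omega), mul_zero]
    · simp [qPoch_zero]
    · -- Adjacent Pascal halves combine since `1 + (q^{2(i+1)} - 1) = q^{2(i+1)}`.
      intro i hi
      have hf : q ^ (((i : ℤ) + 1) * (1 - (M + 1))) * q ^ ((t : ℤ) - (i + 1))
          = q ^ ((t : ℤ) - (i + 1) * (M + 1)) := q_zpow_mul_zpow (by ring)
      have hg : q ^ ((i : ℤ) * (1 - (M + 1))) * q ^ ((t : ℤ) - i - (M + 1))
          = q ^ ((t : ℤ) - (i + 1) * (M + 1)) := q_zpow_mul_zpow (by ring)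
      have hh : q ^ ((t : ℤ) - (i + 1) * (M + 1)) * q ^ (2 * ((i : ℤ) + 1))
          = q ^ (t : ℤ) * q ^ (((i : ℤ) + 1) * (1 - M)) := by
        rw [q_zpow_mul_zpow rfl, q_zpow_mul_zpow rfl]
        ring_nf
      have := qPoch_ne_zero i
      have := q_zpow_sub_one_ne_zero (n := 2 * ((i : ℤ) + 1)) (by omega)
      push_cast
      rw [qPoch_succ, show (t : ℤ) - i - 1 = t - (i + 1) by ring]
      field_simp
      linear_combination qbinom M (t - (i + 1)) * (hf + (q ^ (2 * ((i : ℤ) + 1)) - 1) * hg + hh)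

lemma Cfun_zero_eq {l t s : ℕ} (ht : t ≤ l) (hs : (l : ℤ) - t < s) :
    Cfun l t s 0 = q ^ ((t : ℤ) * (s + t - l + 1)) / qPoch t := by
  obtain ⟨M, hM⟩ : ∃ M : ℕ, (M : ℤ) = s + t - l := ⟨(s + t - l : ℤ).toNat, by omega⟩
  have hterm : ∀ i ∈ range (t + 1), att l t i * q ^ (-(i : ℤ) * (i - l + s)) * qbinom l i
      * qbinom ((t : ℤ) - l + s) (t - i)
      = q ^ ((i : ℤ) * (1 - M)) / qPoch i * qbinom M (t - i) := by
    intro i hi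
    rw [mul_right_comm (att l t i), att_mul_qbinom l t (by grind), div_mul_eq_mul_div,
      q_zpow_mul_zpow (c := i * (1 - M)) (by rw [hM]; ring), show (t : ℤ) - l + s = M by omega]
  have hvanish : ∀ i ∈ Icc (0 : ℤ) t, i ∉ Icc (max 0 ((l : ℤ) - s)) t →
      att l t i.toNat * q ^ (-i * (i - l + s)) * qbinom l i
        * qbinom ((t : ℤ) - l + s) (t - i) = 0 := by
    intro i hi hi'
    simp only [mem_Icc, max_le_iff] at hi hi'
    rw [qbinom_of_lt (c := (t : ℤ) - l + s) (by omega), mul_zero]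
  simp only [Cfun, CharP.cast_eq_zero, sub_zero, add_zero, zero_sub,
    min_eq_left (Nat.cast_le.mpr ht)]
  rw [sum_subset (Icc_subset_Icc (le_max_left _ _) le_rfl) hvanish, Int.Icc_eq_finset_map, sum_map]
  simp only [sub_zero, Function.Embedding.trans_apply, Nat.castEmbedding_apply,
    addLeftEmbedding_apply, zero_add, Int.toNat_natCast, Int.toNat_natCast_add_one]
  rw [sum_congr rfl hterm, sum_qbinom_div_qPoch, hM]

lemma qPoch_eq_algebraMap (n : ℕ) :
    qPoch n = algebraMap (Polynomial ℚ) K (∏ j ∈ Icc 1 n, (Polynomial.X ^ (2 * j) - 1)) := by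
  simp [qPoch, q]

lemma coeff_zero_prod_X_pow_sub_one_ne_zero (n : ℕ) :
    (∏ j ∈ Icc 1 n, (Polynomial.X ^ (2 * j) - 1 : Polynomial ℚ)).coeff 0 ≠ 0 := by
  rw [Polynomial.coeff_zero_eq_eval_zero, Polynomial.eval_prod,
    prod_congr rfl fun j hj => by
      rw [Polynomial.eval_sub, Polynomial.eval_pow, Polynomial.eval_X, Polynomial.eval_one,
        zero_pow (by grind), zero_sub]]
  simp

lemma inA0_inv_algebraMap {r : Polynomial ℚ} (hr : r.coeff 0 ≠ 0) :
    inA0 (algebraMap (Polynomial ℚ) K r)⁻¹ :=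
  ⟨1, r, hr, by rw [map_one, one_div]⟩

lemma not_inA0_inv_algebraMap_mul_q {r : Polynomial ℚ} (hr : r ≠ 0) :
    ¬ inA0 (algebraMap (Polynomial ℚ) K r * q)⁻¹ := by
  rintro ⟨a, b, hb, hab⟩
  have hb0 : b ≠ 0 := fun h => hb (by rw [h, Polynomial.coeff_zero])
  have hrq : algebraMap (Polynomial ℚ) K (r * Polynomial.X)
      = algebraMap (Polynomial ℚ) K r * q := by
    rw [map_mul, RatFunc.algebraMap_X, q]
  rw [← hrq, inv_eq_one_div, div_eq_div_iff (RatFunc.algebraMap_ne_zero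
    (mul_ne_zero hr Polynomial.X_ne_zero)) (RatFunc.algebraMap_ne_zero hb0), one_mul,
    ← map_mul] at hab
  have hba : b = a * (r * Polynomial.X) := RatFunc.algebraMap_injective ℚ hab
  simp [hba] at hb

/-- For `s > l − t` and `0 ≤ t ≤ l`:
`C(s,0) = q^{t(s+t−l+1)} / ((q^{2t} − 1)(q^{2(t−1)} − 1) ⋯ (q^2 − 1))`; in particular the
minimal degree of `C(s,0)` at `q = 0` is `t(s+t−l+1)`, i.e.
`C(s,0) ∈ q^d A₀ \ q^{d+1} A₀` with `d = t(s+t−l+1)`. -/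
theorem Cfun_zero (l t s : ℕ) (ht : t ≤ l) (hs : (l : ℤ) - t < s) :
    Cfun l t s 0
        = q ^ ((t : ℤ) * ((s : ℤ) + t - l + 1)) / ∏ j ∈ Finset.Icc 1 t, (q ^ (2 * j) - 1) ∧
    inA0 (q ^ (-((t : ℤ) * ((s : ℤ) + t - l + 1))) * Cfun l t s 0) ∧
    ¬ inA0 (q ^ (-((t : ℤ) * ((s : ℤ) + t - l + 1)) - 1) * Cfun l t s 0) := by
  set d : ℤ := t * (s + t - l + 1)
  have hC : Cfun l t s 0 = q ^ d / qPoch t := Cfun_zero_eq ht hs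
  have hpoly := coeff_zero_prod_X_pow_sub_one_ne_zero t
  refine ⟨hC, ?_, ?_⟩
  · rw [hC, mul_div_assoc', q_zpow_mul_zpow (neg_add_cancel d), zpow_zero, one_div,
      qPoch_eq_algebraMap]
    exact inA0_inv_algebraMap hpoly
  · rw [hC, mul_div_assoc', q_zpow_mul_zpow (show -d - 1 + d = -1 by ring), zpow_neg_one,
      inv_div_left, qPoch_eq_algebraMap]
    refine not_inA0_inv_algebraMap_mul_q fun h => ?_
    simp [h] at hpoly
end
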